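/- arXiv:2203.17041 — 2 statements merged into one kernel-verified Lean document; each statement's English description precedes it below -/
import Mathlib

section
/- Let G = (V,E) be a finite simple graph with no isolated vertices, let Γ_G = (N,γ) be the independent set game on G, and let {x_S}_{S ⊆ N, S ≠ ∅} be a population monotonic allocation scheme of Γ_G. If i ∈ E is a non-pendant edge of type I (not incident to any pendant edge) with endpoints u and v, then x_{S,i} = 1 for every nonempty S ⊆ N such that δ(u) ⊆ S or δ(v) ⊆ S. -/
open Finset
set_option linter.unusedSectionVars false

variable {V : Type*} [Fintype V] [DecidableEq V]

/-- `I` is an independent set of the graph `G`. -/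
def Indep (G : SimpleGraph V) (I : Finset V) : Prop :=
  ∀ u ∈ I, ∀ v ∈ I, ¬ G.Adj u v

/-- The independence number of `G` restricted to the vertex set `U`,
i.e. `α(G[U])`: the maximum size of an independent set contained in `U`. -/
noncomputable def alphaOn (G : SimpleGraph V) (U : Set V) : ℕ :=
  sSup {n : ℕ | ∃ I : Finset V, ↑I ⊆ U ∧ Indep G I ∧ I.card = n}

/-- `δ(v)`: the set of edges of `G` incident to the vertex `v`. -/
def incEdges (G : SimpleGraph V) (v : V) : Set (Sym2 V) :=
  {e | e ∈ G.edgeSet ∧ v ∈ e}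

/-- `δ(v)` as a finset. -/
def incFinset (G : SimpleGraph V) [DecidableRel G.Adj] (v : V) : Finset (Sym2 V) :=
  G.edgeFinset.filter (fun e => v ∈ e)

/-- `V⟨S⟩`: the set of vertices of `G` all of whose incident edges lie in `S`. -/
def onlyInc (G : SimpleGraph V) (S : Set (Sym2 V)) : Set V :=
  {v | incEdges G v ⊆ S}

/-- The characteristic function of the independent set game on `G`:
`γ(S) = α(G[V⟨S⟩])`. -/
noncomputable def gammaIS (G : SimpleGraph V) (S : Finset (Sym2 V)) : ℕ :=
  alphaOn G (onlyInc G ↑S)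

/-- `x` is a population monotonic allocation scheme (PMAS) of the independent set
game on `G`: it is nonnegative, efficient, and monotone.  Coalitions are the
nonempty subsets of the player set `N = E(G)` (`G.edgeFinset`). -/
def IsPMAS (G : SimpleGraph V) [DecidableRel G.Adj]
    (x : Finset (Sym2 V) → Sym2 V → ℝ) : Prop :=
  (∀ S ⊆ G.edgeFinset, ∀ i ∈ S, 0 ≤ x S i) ∧
  (∀ S ⊆ G.edgeFinset, S.Nonempty → ∑ i ∈ S, x S i = (gammaIS G S : ℝ)) ∧
  (∀ S T : Finset (Sym2 V), S ⊆ T → T ⊆ G.edgeFinset → S.Nonempty →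
    ∀ i ∈ S, x S i ≤ x T i)

/-- An edge of `G` is pendant if one of its endpoints has degree one. -/
def PendantEdge (G : SimpleGraph V) [DecidableRel G.Adj] (e : Sym2 V) : Prop :=
  e ∈ G.edgeSet ∧ ∃ v ∈ e, G.degree v = 1

/-- A non-pendant edge of type I: not incident to any pendant edge. -/
def TypeI (G : SimpleGraph V) [DecidableRel G.Adj] (e : Sym2 V) : Prop :=
  e ∈ G.edgeSet ∧ ¬ PendantEdge G e ∧
    ∀ f : Sym2 V, PendantEdge G f → ¬ ∃ w : V, w ∈ e ∧ w ∈ f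

/-- A non-pendant edge of type II: incident to some pendant edge. -/
def TypeII (G : SimpleGraph V) [DecidableRel G.Adj] (e : Sym2 V) : Prop :=
  e ∈ G.edgeSet ∧ ¬ PendantEdge G e ∧
    ∃ f : Sym2 V, PendantEdge G f ∧ ∃ w : V, w ∈ e ∧ w ∈ f

/-- The vertex `v` has distance at most two to some pendant vertex of `G`. -/
def NearPendant (G : SimpleGraph V) [DecidableRel G.Adj] (v : V) : Prop :=
  ∃ p : V, G.degree p = 1 ∧ ∃ w : G.Walk v p, w.length ≤ 2

section Aux

variable {V : Type*} [Fintype V] [DecidableEq V]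
variable {G : SimpleGraph V} [DecidableRel G.Adj]

lemma mem_onlyInc' {S : Set (Sym2 V)} {z : V} :
    z ∈ onlyInc G S ↔ ∀ y, G.Adj z y → s(z, y) ∈ S := by
  constructor
  · intro h y hy
    exact h ⟨hy, Sym2.mem_mk_left z y⟩
  · rintro h e ⟨he, hz⟩
    obtain ⟨y, rfl⟩ := Sym2.mem_iff_exists.1 hz
    exact h y he

lemma mem_onlyInc_union {a b z : V} :
    z ∈ onlyInc G ↑(incFinset G a ∪ incFinset G b) ↔
      ∀ y, G.Adj z y → (z = a ∨ y = a ∨ z = b ∨ y = b) := by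
  rw [mem_onlyInc']
  refine forall_congr' fun y => ?_
  constructor
  · intro h hy
    have h2 := h hy
    simp only [Finset.coe_union, Set.mem_union, Finset.mem_coe, incFinset,
      Finset.mem_filter, Sym2.mem_iff] at h2
    tauto
  · intro h hy
    have hedge : s(z, y) ∈ G.edgeFinset := by
      rw [SimpleGraph.mem_edgeFinset]; exact hy
    simp only [Finset.coe_union, Set.mem_union, Finset.mem_coe, incFinset,
      Finset.mem_filter, Sym2.mem_iff]
    rcases h hy with h | h | h | h
    · exact Or.inl ⟨hedge, Or.inl h.symm⟩
    · exact Or.inl ⟨hedge, Or.inr h.symm⟩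
    · exact Or.inr ⟨hedge, Or.inl h.symm⟩
    · exact Or.inr ⟨hedge, Or.inr h.symm⟩

lemma mem_onlyInc_single {a z : V} :
    z ∈ onlyInc G ↑(incFinset G a) ↔ ∀ y, G.Adj z y → (z = a ∨ y = a) := by
  rw [← Finset.union_self (incFinset G a), mem_onlyInc_union]
  constructor <;> (intro h y hy; have := h y hy; tauto)

lemma alphaOn_set_nonempty (U : Set V) :
    {n : ℕ | ∃ I : Finset V, ↑I ⊆ U ∧ Indep G I ∧ I.card = n}.Nonempty := by
  refine ⟨0, ∅, by simp, ?_, by simp⟩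
  intro p hp
  simp at hp

lemma alphaOn_bdd (U : Set V) :
    BddAbove {n : ℕ | ∃ I : Finset V, ↑I ⊆ U ∧ Indep G I ∧ I.card = n} := by
  refine ⟨Fintype.card V, fun n hn => ?_⟩
  obtain ⟨I, -, -, hc⟩ := hn
  exact hc ▸ I.card_le_univ

lemma alphaOn_eq_one (U : Set V) (a : V) (ha : a ∈ U)
    (h : ∀ z1 ∈ U, ∀ z2 ∈ U, z1 ≠ z2 → G.Adj z1 z2) : alphaOn G U = 1 := by
  unfold alphaOn
  apply le_antisymm
  · apply csSup_le (alphaOn_set_nonempty U)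
    rintro n ⟨I, hs, hi, rfl⟩
    rw [Finset.card_le_one]
    intro p hp q hq
    by_contra hne
    exact hi p hp q hq (h p (hs hp) q (hs hq) hne)
  · apply le_csSup (alphaOn_bdd U)
    refine ⟨{a}, by simpa using ha, ?_, Finset.card_singleton a⟩
    intro p hp q hq
    simp only [Finset.mem_singleton] at hp hq
    subst hp; subst hq
    simp

lemma gamma_top_le (u v : V) (huv : G.Adj u v) :
    gammaIS G G.edgeFinset ≤ gammaIS G (G.edgeFinset.erase s(u, v)) + 1 := by
  unfold gammaIS alphaOn
  apply csSup_le (alphaOn_set_nonempty _)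
  rintro n ⟨I, hs, hi, rfl⟩
  set J := (I.erase u).erase v with hJ
  have hJI : J ⊆ I := Finset.Subset.trans (Finset.erase_subset _ _) (Finset.erase_subset _ _)
  have hJsub : ↑J ⊆ onlyInc G ↑(G.edgeFinset.erase s(u, v)) := by
    intro z hz
    simp only [Finset.mem_coe, hJ, Finset.mem_erase] at hz
    obtain ⟨hzv, hzu, hzI⟩ := hz
    rw [mem_onlyInc']
    intro y hy
    rw [Finset.coe_erase, Set.mem_diff]
    refine ⟨by rw [Finset.mem_coe, SimpleGraph.mem_edgeFinset]; exact hy, ?_⟩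
    simp only [Set.mem_singleton_iff]
    intro heq
    have : z ∈ s(u, v) := heq ▸ Sym2.mem_mk_left z y
    rw [Sym2.mem_iff] at this
    tauto
  have hJindep : Indep G J := fun p hp q hq => hi p (hJI hp) q (hJI hq)
  have hcard : I.card ≤ J.card + 1 := by
    by_cases hu : u ∈ I
    · have hv : v ∉ I := fun hv => hi u hu v hv huv
      have : J = I.erase u := by rw [hJ, Finset.erase_eq_of_notMem (fun h => hv (Finset.mem_of_mem_erase h))]
      rw [this, Finset.card_erase_of_mem hu]
      omega
    · have : J = I.erase v := by rw [hJ, Finset.erase_eq_of_notMem hu]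
      rw [this]
      by_cases hv : v ∈ I
      · rw [Finset.card_erase_of_mem hv]; omega
      · rw [Finset.erase_eq_of_notMem hv]; omega
  have hle : J.card ≤ sSup {n : ℕ | ∃ I : Finset V, ↑I ⊆ onlyInc G ↑(G.edgeFinset.erase s(u, v)) ∧ Indep G I ∧ I.card = n} :=
    le_csSup (alphaOn_bdd _) ⟨J, hJsub, hJindep, rfl⟩
  omega

lemma incFinset_subset (a : V) : incFinset G a ⊆ G.edgeFinset :=
  Finset.filter_subset _ _

lemma mem_incFinset {a : V} {e : Sym2 V} :
    e ∈ incFinset G a ↔ e ∈ G.edgeSet ∧ a ∈ e := by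
  simp [incFinset, SimpleGraph.mem_edgeFinset]

lemma edge_mem_incFinset_left {a b : V} (hab : G.Adj a b) : s(a, b) ∈ incFinset G a :=
  mem_incFinset.2 ⟨hab, Sym2.mem_mk_left a b⟩

lemma edge_mem_incFinset_right {a b : V} (hab : G.Adj a b) : s(a, b) ∈ incFinset G b :=
  mem_incFinset.2 ⟨hab, Sym2.mem_mk_right a b⟩

/-- For any non-pendant-ish edge `s(u,v)` (with another edge around), and any coalition
containing it, the payoff is at most 1. -/
lemma x_le_one (x : Finset (Sym2 V) → Sym2 V → ℝ) (hx : IsPMAS G x)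
    {u v : V} (huv : G.Adj u v) {f : Sym2 V} (hf : f ∈ G.edgeFinset) (hfne : f ≠ s(u, v))
    {S : Finset (Sym2 V)} (hS : S ⊆ G.edgeFinset) (hiS : s(u, v) ∈ S) :
    x S s(u, v) ≤ 1 := by
  obtain ⟨hnn, heff, hmono⟩ := hx
  set N := G.edgeFinset with hN
  have hiN : s(u, v) ∈ N := SimpleGraph.mem_edgeFinset.2 huv
  have h1 : x S s(u, v) ≤ x N s(u, v) :=
    hmono S N hS (le_refl N) ⟨_, hiS⟩ _ hiS
  have hsplit : x N s(u, v) + ∑ k ∈ N.erase s(u, v), x N k = (gammaIS G N : ℝ) := by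
    rw [Finset.add_sum_erase _ _ hiN]
    exact heff N (le_refl N) ⟨_, hiN⟩
  have hfe : f ∈ N.erase s(u, v) := Finset.mem_erase.2 ⟨hfne, hf⟩
  have herased : N.erase s(u, v) ⊆ N := Finset.erase_subset _ _
  have hmono2 : (gammaIS G (N.erase s(u, v)) : ℝ) ≤ ∑ k ∈ N.erase s(u, v), x N k := by
    rw [← heff (N.erase s(u, v)) herased ⟨f, hfe⟩]
    exact Finset.sum_le_sum fun k hk => hmono _ N herased (le_refl N) ⟨f, hfe⟩ k hk
  have hg := gamma_top_le (G := G) u v huv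
  have hgR : (gammaIS G N : ℝ) ≤ (gammaIS G (N.erase s(u, v)) : ℝ) + 1 := by
    exact_mod_cast hg
  linarith

lemma lemA_half (x : Finset (Sym2 V) → Sym2 V → ℝ) (hx : IsPMAS G x)
    (a b : V) (hab : G.Adj a b)
    (h1 : gammaIS G (incFinset G a) = 1) (h2 : gammaIS G (incFinset G b) = 1)
    (h3 : gammaIS G (incFinset G a ∪ incFinset G b) = 1) :
    1 ≤ x (incFinset G b) s(a, b) := by
  obtain ⟨hnn, heff, hmono⟩ := hx
  set A := incFinset G a with hA
  set B := incFinset G b with hB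
  set D := A ∪ B with hD
  set e := s(a, b) with he
  have hAN : A ⊆ G.edgeFinset := incFinset_subset a
  have hBN : B ⊆ G.edgeFinset := incFinset_subset b
  have hDN : D ⊆ G.edgeFinset := Finset.union_subset hAN hBN
  have heA : e ∈ A := edge_mem_incFinset_left hab
  have heB : e ∈ B := edge_mem_incFinset_right hab
  have heD : e ∈ D := Finset.mem_union_left _ heA
  have hBA : B \ A = B.erase e := by
    ext f
    simp only [Finset.mem_sdiff, Finset.mem_erase, hA, hB, mem_incFinset]
    constructor
    · rintro ⟨⟨hfE, hbf⟩, hfa⟩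
      refine ⟨?_, hfE, hbf⟩
      rintro rfl
      exact hfa ⟨hfE, Sym2.mem_mk_left a b⟩
    · rintro ⟨hfe, hfE, hbf⟩
      refine ⟨⟨hfE, hbf⟩, ?_⟩
      rintro ⟨-, haf⟩
      apply hfe
      obtain ⟨y, rfl⟩ := Sym2.mem_iff_exists.1 hbf
      rw [Sym2.mem_iff] at haf
      rcases haf with rfl | rfl
      · exact absurd rfl hab.ne'
      · exact Sym2.eq_swap
  have hDsum : ∑ k ∈ D, x D k = 1 := by
    have := heff D hDN ⟨e, heD⟩
    rw [h3] at this
    simpa using this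
  have hDsplit : ∑ k ∈ D, x D k = ∑ k ∈ A, x D k + ∑ k ∈ B.erase e, x D k := by
    rw [← hBA, ← Finset.sum_union Finset.disjoint_sdiff, Finset.union_sdiff_self_eq_union]
  have hAge : (1 : ℝ) ≤ ∑ k ∈ A, x D k := by
    have hs := heff A hAN ⟨e, heA⟩
    rw [h1] at hs
    calc (1 : ℝ) = ∑ k ∈ A, x A k := by rw [hs]; simp
    _ ≤ ∑ k ∈ A, x D k :=
      Finset.sum_le_sum fun k hk => hmono A D Finset.subset_union_left hDN ⟨e, heA⟩ k hk
  have hBsum : x B e + ∑ k ∈ B.erase e, x B k = 1 := by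
    rw [Finset.add_sum_erase _ _ heB]
    have := heff B hBN ⟨e, heB⟩
    rw [h2] at this
    simpa using this
  have hBge : ∑ k ∈ B.erase e, x B k ≤ ∑ k ∈ B.erase e, x D k :=
    Finset.sum_le_sum fun k hk =>
      hmono B D Finset.subset_union_right hDN ⟨e, heB⟩ k (Finset.mem_of_mem_erase hk)
  linarith

lemma lemA (x : Finset (Sym2 V) → Sym2 V → ℝ) (hx : IsPMAS G x)
    (a b : V) (hab : G.Adj a b)
    (h1 : gammaIS G (incFinset G a) = 1) (h2 : gammaIS G (incFinset G b) = 1)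
    (h3 : gammaIS G (incFinset G a ∪ incFinset G b) = 1) :
    x (incFinset G a) s(a, b) = 1 ∧
      ∀ k ∈ incFinset G a, k ≠ s(a, b) → x (incFinset G a) k = 0 := by
  have hswap : gammaIS G (incFinset G b ∪ incFinset G a) = 1 := by
    rwa [Finset.union_comm]
  have hhalf : 1 ≤ x (incFinset G a) s(a, b) := by
    have := lemA_half x hx b a hab.symm h2 h1 hswap
    rwa [Sym2.eq_swap] at this
  obtain ⟨hnn, heff, hmono⟩ := hx
  set A := incFinset G a with hA
  have hAN : A ⊆ G.edgeFinset := incFinset_subset a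
  have heA : s(a, b) ∈ A := edge_mem_incFinset_left hab
  have hsum : x A s(a, b) + ∑ k ∈ A.erase s(a, b), x A k = 1 := by
    rw [Finset.add_sum_erase _ _ heA]
    have := heff A hAN ⟨_, heA⟩
    rw [h1] at this
    simpa using this
  have hnonneg : ∀ k ∈ A.erase s(a, b), 0 ≤ x A k := fun k hk =>
    hnn A hAN k (Finset.mem_of_mem_erase hk)
  have hrest : ∑ k ∈ A.erase s(a, b), x A k = 0 := by
    have h0 : 0 ≤ ∑ k ∈ A.erase s(a, b), x A k := Finset.sum_nonneg hnonneg
    linarith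
  refine ⟨by linarith [Finset.sum_nonneg hnonneg], ?_⟩
  intro k hk hkne
  have hk' : k ∈ A.erase s(a, b) := Finset.mem_erase.2 ⟨hkne, hk⟩
  have := (Finset.sum_eq_zero_iff_of_nonneg hnonneg).1 hrest k hk'
  exact this

end Aux

section Main

variable {V : Type*} [Fintype V] [DecidableEq V]
variable {G : SimpleGraph V} [DecidableRel G.Adj]

lemma exists_adj (hiso : ∀ w : V, G.degree w ≠ 0) (z : V) : ∃ y, G.Adj z y := by
  have := hiso z
  rw [← (G.degree_pos_iff_exists_adj z)]
  omega

lemma degree_eq_one_of_unique {z u : V} (hadj : G.Adj z u)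
    (h : ∀ y, G.Adj z y → y = u) : G.degree z = 1 := by
  have : G.neighborFinset z = {u} := by
    ext y
    simp only [SimpleGraph.mem_neighborFinset, Finset.mem_singleton]
    exact ⟨fun hy => h y hy, fun hy => hy ▸ hadj⟩
  show (G.neighborFinset z).card = 1
  rw [this, Finset.card_singleton]

lemma gamma_delta_eq_one (hiso : ∀ w : V, G.degree w ≠ 0) (a : V)
    (hpend : ∀ z, G.Adj a z → G.degree z ≠ 1) :
    gammaIS G (incFinset G a) = 1 := by
  unfold gammaIS
  have hsub : ∀ z ∈ onlyInc G ↑(incFinset G a), z = a := by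
    intro z hz
    rw [mem_onlyInc_single] at hz
    by_contra hne
    have hall : ∀ y, G.Adj z y → y = a := by
      intro y hy
      rcases hz y hy with h | h
      · exact absurd h hne
      · exact h
    obtain ⟨y, hy⟩ := exists_adj hiso z
    have hza : G.Adj z a := (hall y hy) ▸ hy
    exact hpend z hza.symm (degree_eq_one_of_unique hza hall)
  apply alphaOn_eq_one _ a
  · rw [mem_onlyInc_single]
    intro y _
    exact Or.inl rfl
  · intro z1 h1 z2 h2 hne
    exact absurd ((hsub z1 h1).trans (hsub z2 h2).symm) hne

end Main

/-- Lemma 5 of the paper.  If `x` is a PMAS of the independent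
set game on `G` and `i = uv` is a non-pendant edge of type I, then `x_{S,i} = 1`
for every nonempty coalition `S` with `δ(u) ⊆ S` or `δ(v) ⊆ S`. -/
theorem stmt_5 (G : SimpleGraph V) [DecidableRel G.Adj]
    (hiso : ∀ v : V, G.degree v ≠ 0)
    (x : Finset (Sym2 V) → Sym2 V → ℝ) (hx : IsPMAS G x)
    (u v : V) (huv : G.Adj u v) (hI : TypeI G s(u, v)) :
    ∀ S ⊆ G.edgeFinset, S.Nonempty →
      (incFinset G u ⊆ S ∨ incFinset G v ⊆ S) → x S s(u, v) = 1 := by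
  intro S hS hSne hdelta
  obtain ⟨he, hnp, hnf⟩ := hI
  have hne : u ≠ v := huv.ne
  have hdu : G.degree u ≠ 1 := fun h => hnp ⟨he, u, Sym2.mem_mk_left u v, h⟩
  have hdv : G.degree v ≠ 1 := fun h => hnp ⟨he, v, Sym2.mem_mk_right u v, h⟩
  have hpu : ∀ z, G.Adj u z → G.degree z ≠ 1 := by
    intro z hz h1
    exact hnf s(u, z) ⟨hz, z, Sym2.mem_mk_right u z, h1⟩
      ⟨u, Sym2.mem_mk_left u v, Sym2.mem_mk_left u z⟩
  have hpv : ∀ z, G.Adj v z → G.degree z ≠ 1 := by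
    intro z hz h1
    exact hnf s(v, z) ⟨hz, z, Sym2.mem_mk_right v z, h1⟩
      ⟨v, Sym2.mem_mk_right u v, Sym2.mem_mk_left v z⟩
  have hgu : gammaIS G (incFinset G u) = 1 := gamma_delta_eq_one hiso u hpu
  have hgv : gammaIS G (incFinset G v) = 1 := gamma_delta_eq_one hiso v hpv
  have hiS : s(u, v) ∈ S := by
    rcases hdelta with h | h
    · exact h (edge_mem_incFinset_left huv)
    · exact h (edge_mem_incFinset_right huv)
  -- an auxiliary second edge, for the upper bound
  have hdu2 : 1 < G.degree u := by have := hiso u; omega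
  obtain ⟨y0, hy0, hy0v⟩ :=
    Finset.exists_mem_ne (show 1 < (G.neighborFinset u).card from hdu2) v
  have hy0adj : G.Adj u y0 := (G.mem_neighborFinset u y0).1 hy0
  have hfmem : s(u, y0) ∈ G.edgeFinset := SimpleGraph.mem_edgeFinset.2 hy0adj
  have hfne : s(u, y0) ≠ s(u, v) := fun h => hy0v (Sym2.congr_right.1 h)
  have hub : x S s(u, v) ≤ 1 := x_le_one x hx huv hfmem hfne hS hiS
  -- vertices of V⟨δ(u) ∪ δ(v)⟩ other than u, v are adjacent to both
  have hW : ∀ z, z ∈ onlyInc G ↑(incFinset G u ∪ incFinset G v) → z ≠ u → z ≠ v →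
      G.Adj u z ∧ G.Adj v z := by
    intro z hz hzu hzv
    rw [mem_onlyInc_union] at hz
    have hz' : ∀ y, G.Adj z y → y = u ∨ y = v := by
      intro y hy
      rcases hz y hy with h | h | h | h
      exacts [absurd h hzu, Or.inl h, absurd h hzv, Or.inr h]
    have hzadju : G.Adj z u := by
      by_contra hno
      have hall : ∀ y, G.Adj z y → y = v := by
        intro y hy
        rcases hz' y hy with rfl | rfl
        · exact absurd hy hno
        · rfl
      obtain ⟨y, hy⟩ := exists_adj hiso z
      have hzv' : G.Adj z v := (hall y hy) ▸ hy
      exact absurd (degree_eq_one_of_unique hzv' hall) (hpv z hzv'.symm)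
    have hzadjv : G.Adj z v := by
      by_contra hno
      have hall : ∀ y, G.Adj z y → y = u := by
        intro y hy
        rcases hz' y hy with rfl | rfl
        · rfl
        · exact absurd hy hno
      obtain ⟨y, hy⟩ := exists_adj hiso z
      have hzu' : G.Adj z u := (hall y hy) ▸ hy
      exact absurd (degree_eq_one_of_unique hzu' hall) (hpu z hzu'.symm)
    exact ⟨hzadju.symm, hzadjv.symm⟩
  by_cases hone : ∀ z1 z2 : V,
      (z1 ∈ onlyInc G ↑(incFinset G u ∪ incFinset G v) ∧ z1 ≠ u ∧ z1 ≠ v) →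
      (z2 ∈ onlyInc G ↑(incFinset G u ∪ incFinset G v) ∧ z2 ≠ u ∧ z2 ≠ v) → z1 = z2
  · -- at most one extra vertex: γ(δ(u) ∪ δ(v)) = 1
    have hclass : ∀ z, z ∈ onlyInc G ↑(incFinset G u ∪ incFinset G v) →
        z = u ∨ z = v ∨ ((G.Adj u z ∧ G.Adj v z) ∧ z ≠ u ∧ z ≠ v) := by
      intro z hz
      by_cases h1 : z = u
      · exact Or.inl h1
      by_cases h2 : z = v
      · exact Or.inr (Or.inl h2)
      exact Or.inr (Or.inr ⟨hW z hz h1 h2, h1, h2⟩)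
    have hguv : gammaIS G (incFinset G u ∪ incFinset G v) = 1 := by
      unfold gammaIS
      apply alphaOn_eq_one _ u
      · rw [mem_onlyInc_union]
        intro y _
        exact Or.inl rfl
      · intro z1 h1 z2 h2 hzne
        rcases hclass z1 h1 with rfl | rfl | ⟨⟨ha1, hb1⟩, hu1, hv1⟩ <;>
          rcases hclass z2 h2 with rfl | rfl | ⟨⟨ha2, hb2⟩, hu2, hv2⟩
        · exact absurd rfl hzne
        · exact huv
        · exact ha2
        · exact huv.symm
        · exact absurd rfl hzne
        · exact hb2
        · exact ha1.symm
        · exact hb1.symm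
        · exact absurd (hone z1 z2 ⟨h1, hu1, hv1⟩ ⟨h2, hu2, hv2⟩) hzne
    have hres_u := lemA x hx u v huv hgu hgv hguv
    have hres_v := lemA x hx v u huv.symm hgv hgu (by rwa [Finset.union_comm])
    rcases hdelta with h | h
    · have hlb : x (incFinset G u) s(u, v) ≤ x S s(u, v) :=
        hx.2.2 _ S h hS ⟨_, edge_mem_incFinset_left huv⟩ _ (edge_mem_incFinset_left huv)
      linarith [hres_u.1]
    · have hv1 := hres_v.1
      rw [Sym2.eq_swap] at hv1
      have hlb : x (incFinset G v) s(u, v) ≤ x S s(u, v) :=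
        hx.2.2 _ S h hS ⟨_, edge_mem_incFinset_right huv⟩ _ (edge_mem_incFinset_right huv)
      linarith
  · -- two distinct extra vertices: contradiction
    push_neg at hone
    obtain ⟨w1, w2, ⟨hw1mem, hw1u, hw1v⟩, ⟨hw2mem, hw2u, hw2v⟩, hww⟩ := hone
    have main : ∀ wa wb : V, wa ∈ onlyInc G ↑(incFinset G u ∪ incFinset G v) → wa ≠ u →
        wa ≠ v → wb ∈ onlyInc G ↑(incFinset G u ∪ incFinset G v) → wb ≠ u → wb ≠ v →
        wa ≠ wb →
        x (incFinset G u) s(u, wa) = 1 ∧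
          ∀ k ∈ incFinset G u, k ≠ s(u, wa) → x (incFinset G u) k = 0 := by
      intro wa wb hwa hwau hwav hwb hwbu hwbv hwab
      obtain ⟨hadjua, hadjva⟩ := hW wa hwa hwau hwav
      obtain ⟨hadjub, hadjvb⟩ := hW wb hwb hwbu hwbv
      have hNwa : ∀ y, G.Adj wa y → y = u ∨ y = v := by
        rw [mem_onlyInc_union] at hwa
        intro y hy
        rcases hwa y hy with h | h | h | h
        exacts [absurd h hwau, Or.inl h, absurd h hwav, Or.inr h]
      have hgwa : gammaIS G (incFinset G wa) = 1 := by
        apply gamma_delta_eq_one hiso wa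
        intro z hz
        rcases hNwa z hz with rfl | rfl
        exacts [hdu, hdv]
      have hsub1 : ∀ z, z ∈ onlyInc G ↑(incFinset G u ∪ incFinset G wa) →
          z = u ∨ z = wa := by
        intro z hz
        by_contra hcon
        push_neg at hcon
        obtain ⟨hzu, hzw⟩ := hcon
        rw [mem_onlyInc_union] at hz
        have hz' : ∀ y, G.Adj z y → y = u ∨ y = wa := by
          intro y hy
          rcases hz y hy with h | h | h | h
          exacts [absurd h hzu, Or.inl h, absurd h hzw, Or.inr h]
        have hzw1 : G.Adj z wa := by
          by_contra hno
          have hall : ∀ y, G.Adj z y → y = u := by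
            intro y hy
            rcases hz' y hy with rfl | rfl
            · rfl
            · exact absurd hy hno
          obtain ⟨y, hy⟩ := exists_adj hiso z
          have hzu' : G.Adj z u := (hall y hy) ▸ hy
          exact absurd (degree_eq_one_of_unique hzu' hall) (hpu z hzu'.symm)
        rcases hNwa z hzw1.symm with rfl | rfl
        · exact hzu rfl
        · rcases hz' wb hadjvb with h | h
          · exact hwbu h
          · exact hwab h.symm
      have hguwa : gammaIS G (incFinset G u ∪ incFinset G wa) = 1 := by
        unfold gammaIS
        apply alphaOn_eq_one _ u
        · rw [mem_onlyInc_union]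
          intro y _
          exact Or.inl rfl
        · intro z1 h1 z2 h2 hzne
          rcases hsub1 z1 h1 with rfl | rfl <;> rcases hsub1 z2 h2 with rfl | rfl
          exacts [absurd rfl hzne, hadjua, hadjua.symm, absurd rfl hzne]
      exact lemA x hx u wa hadjua hgu hgwa hguwa
    have hres1 := main w1 w2 hw1mem hw1u hw1v hw2mem hw2u hw2v hww
    have hres2 := main w2 w1 hw2mem hw2u hw2v hw1mem hw1u hw1v hww.symm
    have hadjuw2 : G.Adj u w2 := (hW w2 hw2mem hw2u hw2v).1
    have hmem2 : s(u, w2) ∈ incFinset G u := edge_mem_incFinset_left hadjuw2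
    have hne12 : s(u, w2) ≠ s(u, w1) := fun h => hww (Sym2.congr_right.1 h).symm
    have h0 := hres1.2 _ hmem2 hne12
    have h1' := hres2.1
    exfalso
    rw [h0] at h1'
    exact zero_ne_one h1'
end

section
/- Let G = (V,E) be a finite simple graph with no isolated vertices, let Γ_G = (N,γ) be the independent set game on G, and let {x_S}_{S ⊆ N, S ≠ ∅} be a population monotonic allocation scheme of Γ_G. If v* is a vertex whose distance to every pendant vertex of G is greater than two, then there is at most one neighbor u ∈ N(v*) with |N(u,v*)| ≤ 1, where N(u,v*) = {w ∈ V : N(w) = {u,v*}}. -/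
open Finset

variable {V : Type*} [Fintype V] [DecidableEq V]

/-!
Let `A = δ(v*)` and, for a neighbour `u` of `v*`, `D = δ(u)`; then `A ∩ D = {v*u}`.
Since no vertex is isolated and no pendant vertex lies within distance two of `v*`,
`V⟨A⟩ = {v*}` and `V⟨D⟩ = {u}`, while `V⟨A ∪ D⟩ ⊆ {v*, u} ∪ N(u, v*)` is a clique as soon
as `|N(u, v*)| ≤ 1`; so `γ(A) = γ(D) = γ(A ∪ D) = 1`. For a PMAS, `γ(A) = γ(A ∪ D)` forces
`x_{A ∪ D}` to agree with `x_A` on `A` and to vanish on `D \ A`, and then monotonicity from `D`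
gives `x_A(v*u) ≥ x_D(v*u) = γ(D) = 1`. Two such neighbours would give `γ(A) ≥ 2`.
-/

theorem Set.mem_of_subset_pair_of_not_subset_singleton {α : Type*} {s : Set α} {a b : α}
    (h : s ⊆ {a, b}) (ha : ¬ s ⊆ {a}) : b ∈ s := by
  obtain ⟨z, hz, hza⟩ := Set.not_subset.mp ha
  rcases h hz with rfl | rfl
  exacts [absurd rfl hza, hz]

open SimpleGraph

variable {G : SimpleGraph V}

omit [Fintype V] in
theorem alphaOn_eq_one_of_isClique {U : Set V} {a : V} (ha : a ∈ U) (hU : G.IsClique U) :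
    alphaOn G U = 1 := by
  have hle : ∀ n ∈ {n : ℕ | ∃ I : Finset V, ↑I ⊆ U ∧ Indep G I ∧ I.card = n}, n ≤ 1 := by
    rintro n ⟨I, hIU, hI, rfl⟩
    refine Finset.card_le_one.mpr fun b hb c hc => ?_
    by_contra hbc
    exact hI b hb c hc (hU (hIU hb) (hIU hc) hbc)
  have hone : 1 ∈ {n : ℕ | ∃ I : Finset V, ↑I ⊆ U ∧ Indep G I ∧ I.card = n} :=
    ⟨{a}, by simpa using ha, by simp [Indep], by simp⟩
  exact le_antisymm (csSup_le ⟨1, hone⟩ hle) (le_csSup ⟨1, hle⟩ hone)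

omit [Fintype V] [DecidableEq V] in
theorem mem_onlyInc_iff {S : Set (Sym2 V)} {w : V} :
    w ∈ onlyInc G S ↔ ∀ z, G.Adj w z → s(w, z) ∈ S := by
  refine ⟨fun h z hz => h ⟨hz, Sym2.mem_mk_left w z⟩, fun h e ⟨he, hwe⟩ => ?_⟩
  induction e with
  | h a b =>
    rcases Sym2.mem_iff.mp hwe with rfl | rfl
    · exact h b he
    · exact Sym2.eq_swap ▸ h a (G.adj_symm he)

theorem mem_incFinset_iff [DecidableRel G.Adj] {a : V} {e : Sym2 V} :
    e ∈ incFinset G a ↔ e ∈ G.edgeSet ∧ a ∈ e := by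
  simp [incFinset]

theorem incFinset_subset_edgeFinset [DecidableRel G.Adj] (a : V) :
    incFinset G a ⊆ G.edgeFinset :=
  filter_subset _ _

theorem mk_mem_incFinset [DecidableRel G.Adj] {a b : V} (h : G.Adj a b) :
    s(a, b) ∈ incFinset G a :=
  mem_incFinset_iff.mpr ⟨h, Sym2.mem_mk_left a b⟩

theorem incFinset_inter_incFinset [DecidableRel G.Adj] {a b : V} (h : G.Adj a b) :
    incFinset G a ∩ incFinset G b = {s(a, b)} := by
  ext e
  simp only [mem_inter, mem_incFinset_iff, mem_singleton]
  constructor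
  · rintro ⟨⟨-, ha⟩, -, hb⟩
    exact (Sym2.mem_and_mem_iff h.ne).mp ⟨ha, hb⟩
  · rintro rfl
    exact ⟨⟨h, Sym2.mem_mk_left a b⟩, h, Sym2.mem_mk_right a b⟩

theorem mem_onlyInc_incFinset_union_iff [DecidableRel G.Adj] {a b w : V} :
    w ∈ onlyInc G ↑(incFinset G a ∪ incFinset G b) ↔
      w = a ∨ w = b ∨ G.neighborSet w ⊆ {a, b} := by
  simp only [mem_onlyInc_iff, coe_union, Set.mem_union, mem_coe, mem_incFinset_iff,
    Set.subset_pair_iff, mem_neighborSet, mem_edgeSet, Sym2.mem_iff]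
  constructor
  · intro h
    by_cases hwa : w = a
    · exact .inl hwa
    by_cases hwb : w = b
    · exact .inr (.inl hwb)
    refine .inr (.inr fun z hz => ?_)
    rcases h z hz with ⟨-, ha | ha⟩ | ⟨-, hb | hb⟩
    exacts [absurd ha.symm hwa, .inl ha.symm, absurd hb.symm hwb, .inr hb.symm]
  · rintro (rfl | rfl | h) z hz
    · exact .inl ⟨hz, .inl rfl⟩
    · exact .inr ⟨hz, .inl rfl⟩
    · rcases h z hz with rfl | rfl
      exacts [.inl ⟨hz, .inr rfl⟩, .inr ⟨hz, .inr rfl⟩]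

theorem mem_onlyInc_incFinset_iff [DecidableRel G.Adj] {a w : V} :
    w ∈ onlyInc G ↑(incFinset G a) ↔ w = a ∨ G.neighborSet w ⊆ {a} := by
  simpa using mem_onlyInc_incFinset_union_iff (G := G) (a := a) (b := a) (w := w)

omit [DecidableEq V] in
theorem degree_eq_one_of_neighborSet_subset_singleton [DecidableRel G.Adj] {w a : V}
    (hw : G.degree w ≠ 0) (h : G.neighborSet w ⊆ {a}) : G.degree w = 1 ∧ G.Adj a w := by
  have hsub : G.neighborFinset w ⊆ {a} := fun z hz => by
    simpa using h ((mem_neighborFinset G w z).mp hz)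
  obtain ⟨z, hz⟩ :=
    Finset.card_pos.mp (Nat.pos_of_ne_zero (G.card_neighborFinset_eq_degree w ▸ hw))
  obtain rfl : z = a := mem_singleton.mp (hsub hz)
  refine ⟨?_, G.adj_symm ((mem_neighborFinset G w z).mp hz)⟩
  rw [← card_neighborFinset_eq_degree, Finset.eq_singleton_iff_unique_mem.mpr
    ⟨hz, fun y hy => mem_singleton.mp (hsub hy)⟩, card_singleton]

omit [DecidableEq V] in
theorem NearPendant.of_neighborSet_subset_singleton [DecidableRel G.Adj]
    (hiso : ∀ w : V, G.degree w ≠ 0) {v a w : V} (q : G.Walk v a) (hq : q.length ≤ 1)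
    (h : G.neighborSet w ⊆ {a}) : NearPendant G v := by
  obtain ⟨hdeg, haw⟩ := degree_eq_one_of_neighborSet_subset_singleton (hiso w) h
  exact ⟨w, hdeg, q.concat haw, by simp [hq]⟩

section Incidence

variable [DecidableRel G.Adj] {a b : V}

theorem gammaIS_incFinset (ha : ∀ w, ¬ G.neighborSet w ⊆ {a}) :
    gammaIS G (incFinset G a) = 1 := by
  have hU : onlyInc G ↑(incFinset G a) = {a} := by
    ext w
    simp [mem_onlyInc_incFinset_iff, ha w]
  rw [gammaIS, hU]
  exact alphaOn_eq_one_of_isClique rfl (IsClique.of_subsingleton Set.subsingleton_singleton)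

theorem gammaIS_incFinset_union (hab : G.Adj a b) (ha : ∀ w, ¬ G.neighborSet w ⊆ {a})
    (hb : ∀ w, ¬ G.neighborSet w ⊆ {b}) (hW : {w | G.neighborSet w = {b, a}}.Subsingleton) :
    gammaIS G (incFinset G a ∪ incFinset G b) = 1 := by
  set W := {w | G.neighborSet w = {b, a}}
  have hsub : onlyInc G ↑(incFinset G a ∪ incFinset G b) ⊆ insert a (insert b W) := by
    intro w hw
    rcases mem_onlyInc_incFinset_union_iff.mp hw with rfl | rfl | hN
    · exact .inl rfl
    · exact .inr (.inl rfl)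
    refine .inr (.inr (Set.Subset.antisymm (by rwa [Set.pair_comm]) ?_))
    exact Set.insert_subset_iff.mpr ⟨Set.mem_of_subset_pair_of_not_subset_singleton hN (ha w),
      Set.singleton_subset_iff.mpr <| Set.mem_of_subset_pair_of_not_subset_singleton
        (Set.pair_comm a b ▸ hN) (hb w)⟩
  have hclique : G.IsClique (insert a (insert b W)) := by
    refine isClique_insert.mpr ⟨isClique_insert.mpr ⟨.of_subsingleton hW, ?_⟩, ?_⟩
    · intro w (hw : G.neighborSet w = {b, a}) _
      exact G.adj_symm (show b ∈ G.neighborSet w by simp [hw])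
    · rintro w (rfl | (hw : G.neighborSet w = {b, a})) _
      · exact hab
      · exact G.adj_symm (show a ∈ G.neighborSet w by simp [hw])
  exact alphaOn_eq_one_of_isClique
    (mem_onlyInc_incFinset_union_iff.mpr (.inl rfl)) (hclique.subset hsub)

end Incidence

section PMAS

variable [DecidableRel G.Adj] {x : Finset (Sym2 V) → Sym2 V → ℝ} {S T : Finset (Sym2 V)}

omit [DecidableEq V] in
theorem IsPMAS.sum_le_gammaIS (hx : IsPMAS G x) (hT : T ⊆ G.edgeFinset) (hST : S ⊆ T) :
    ∑ i ∈ S, x T i ≤ gammaIS G T := by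
  rcases T.eq_empty_or_nonempty with rfl | hTne
  · simp [subset_empty.mp hST]
  calc ∑ i ∈ S, x T i ≤ ∑ i ∈ T, x T i :=
        sum_le_sum_of_subset_of_nonneg hST fun i hi _ => hx.1 T hT i hi
    _ = gammaIS G T := hx.2.1 T hT hTne

theorem IsPMAS.add_le_gammaIS (hx : IsPMAS G x) (hS : S ⊆ G.edgeFinset) {i j : Sym2 V}
    (hi : i ∈ S) (hj : j ∈ S) (hij : i ≠ j) : x S i + x S j ≤ gammaIS G S := by
  rw [← sum_pair hij]
  exact hx.sum_le_gammaIS hS (insert_subset_iff.mpr ⟨hi, singleton_subset_iff.mpr hj⟩)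

omit [DecidableEq V] in
theorem IsPMAS.eq_of_gammaIS_eq (hx : IsPMAS G x) (hST : S ⊆ T) (hT : T ⊆ G.edgeFinset)
    (hS : S.Nonempty) (hγ : gammaIS G S = gammaIS G T) : ∀ i ∈ S, x S i = x T i := by
  have hle : ∀ i ∈ S, x S i ≤ x T i := hx.2.2 S T hST hT hS
  have hsum : ∑ i ∈ S, (x T i - x S i) = 0 := by
    refine le_antisymm ?_ (sum_nonneg fun i hi => sub_nonneg.mpr (hle i hi))
    rw [sum_sub_distrib, hx.2.1 S (hST.trans hT) hS, hγ]
    linarith [hx.sum_le_gammaIS hT hST]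
  intro i hi
  linarith [(sum_eq_zero_iff_of_nonneg fun j hj => sub_nonneg.mpr (hle j hj)).mp hsum i hi]

theorem IsPMAS.eq_zero_of_gammaIS_eq (hx : IsPMAS G x) (hST : S ⊆ T) (hT : T ⊆ G.edgeFinset)
    (hS : S.Nonempty) (hγ : gammaIS G S = gammaIS G T) : ∀ i ∈ T \ S, x T i = 0 := by
  have hsum : ∑ i ∈ T \ S, x T i = 0 := by
    have hsplit := sum_sdiff (f := x T) hST
    rw [hx.2.1 T hT (hS.mono hST), ← sum_congr rfl (hx.eq_of_gammaIS_eq hST hT hS hγ),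
      hx.2.1 S (hST.trans hT) hS, hγ] at hsplit
    linarith
  exact (sum_eq_zero_iff_of_nonneg fun i hi => hx.1 T hT i (sdiff_subset hi)).mp hsum

theorem IsPMAS.gammaIS_le_of_inter_eq_singleton (hx : IsPMAS G x) {e : Sym2 V}
    (hST : S ∪ T ⊆ G.edgeFinset) (he : S ∩ T = {e}) (hS : gammaIS G S = gammaIS G (S ∪ T))
    (hT : gammaIS G T = gammaIS G (S ∪ T)) : (gammaIS G S : ℝ) ≤ x S e := by
  have heST : e ∈ S ∩ T := he ▸ mem_singleton_self e
  have heS : e ∈ S := mem_of_mem_inter_left heST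
  have heT : e ∈ T := mem_of_mem_inter_right heST
  have hzero : ∀ f ∈ T.erase e, x T f ≤ 0 := by
    intro f hf
    obtain ⟨hfe, hfT⟩ := mem_erase.mp hf
    have hfS : f ∉ S := fun hfS => hfe (mem_singleton.mp (he ▸ mem_inter.mpr ⟨hfS, hfT⟩))
    calc x T f ≤ x (S ∪ T) f := hx.2.2 T _ subset_union_right hST ⟨e, heT⟩ f hfT
      _ = 0 := hx.eq_zero_of_gammaIS_eq subset_union_left hST ⟨e, heS⟩ hS f
          (mem_sdiff.mpr ⟨mem_union_right S hfT, hfS⟩)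
  calc (gammaIS G S : ℝ) = gammaIS G T := by rw [hS, hT]
    _ = x T e + ∑ f ∈ T.erase e, x T f := by
      rw [add_sum_erase _ _ heT, hx.2.1 T (subset_union_right.trans hST) ⟨e, heT⟩]
    _ ≤ x T e := add_le_of_nonpos_right (sum_nonpos hzero)
    _ ≤ x (S ∪ T) e := hx.2.2 T _ subset_union_right hST ⟨e, heT⟩ e heT
    _ = x S e := (hx.eq_of_gammaIS_eq subset_union_left hST ⟨e, heS⟩ hS e heS).symm

end PMAS

/-- Let `x` be a PMAS of the independent set game on `G` (a
graph with no isolated vertices).  If the vertex `v*` has distance greater than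
two to every pendant vertex of `G`, then there is at most one neighbor
`u ∈ N(v*)` with `|N(u, v*)| ≤ 1`. -/
theorem stmt_14 (G : SimpleGraph V) [DecidableRel G.Adj]
    (hiso : ∀ w : V, G.degree w ≠ 0)
    (x : Finset (Sym2 V) → Sym2 V → ℝ) (hx : IsPMAS G x)
    (vstar : V)
    (hfar : ∀ p : V, G.degree p = 1 → ¬ ∃ w : G.Walk vstar p, w.length ≤ 2) :
    {u : V | G.Adj vstar u ∧
      {w : V | G.neighborSet w = {u, vstar}}.Subsingleton}.Subsingleton := by
  have hnear : ¬ NearPendant G vstar := fun ⟨p, hp, hw⟩ => hfar p hp hw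
  have hvstar : ∀ w, ¬ G.neighborSet w ⊆ {vstar} := fun w h =>
    hnear (NearPendant.of_neighborSet_subset_singleton hiso .nil (by simp) h)
  have hγA := gammaIS_incFinset hvstar
  have one_le : ∀ u, G.Adj vstar u → {w | G.neighborSet w = {u, vstar}}.Subsingleton →
      1 ≤ x (incFinset G vstar) s(vstar, u) := by
    intro u hu hW
    have hu' : ∀ w, ¬ G.neighborSet w ⊆ {u} := fun w h =>
      hnear (NearPendant.of_neighborSet_subset_singleton hiso (.cons hu .nil) (by simp) h)
    have hγB := gammaIS_incFinset_union hu hvstar hu' hW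
    simpa [hγA] using hx.gammaIS_le_of_inter_eq_singleton
      (union_subset (incFinset_subset_edgeFinset _) (incFinset_subset_edgeFinset _))
      (incFinset_inter_incFinset hu) (hγA.trans hγB.symm)
      ((gammaIS_incFinset hu').trans hγB.symm)
  rintro u₁ ⟨hu₁, hW₁⟩ u₂ ⟨hu₂, hW₂⟩
  by_contra hne
  have hsum := hx.add_le_gammaIS (incFinset_subset_edgeFinset vstar) (mk_mem_incFinset hu₁)
    (mk_mem_incFinset hu₂) (mt Sym2.congr_right.mp hne)
  rw [hγA, Nat.cast_one] at hsum
  linarith [one_le u₁ hu₁ hW₁, one_le u₂ hu₂ hW₂]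
end
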